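/- For every real number p with 1 ≤ p < ∞, in the Banach space ℓᵖ of real p-summable sequences there exists a set T which is Haar null and meager but not Haar meager. -/

import Mathlib

open MeasureTheory Set

/-- A set in a topological abelian group is *Haar meager* if there is a Borel set `B ⊇ A`,
a nonempty compact metric space `K` and a continuous `f : K → G` such that `f ⁻¹' (B + x)`
is meager in `K` for every `x ∈ G`. -/
def IsHaarMeager {G : Type*} [TopologicalSpace G] [AddCommGroup G] (A : Set G) : Prop :=
  ∃ B : Set G, A ⊆ B ∧ MeasurableSet[borel G] B ∧
    ∃ (K : Type) (_ : MetricSpace K) (_ : CompactSpace K) (_ : Nonempty K) (f : K → G),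
      Continuous f ∧ ∀ x : G, IsMeagre (f ⁻¹' ((fun b => b + x) '' B))

/-- A set in a topological abelian group is *Haar null* if there is a Borel probability
measure `μ` and a Borel set `B ⊇ A` with `μ (x + B) = 0` for every `x ∈ G`. -/
def IsHaarNull {G : Type*} [TopologicalSpace G] [AddCommGroup G] (A : Set G) : Prop :=
  ∃ μ : @Measure G (borel G), @IsProbabilityMeasure G (borel G) μ ∧
    ∃ B : Set G, A ⊆ B ∧ MeasurableSet[borel G] B ∧
      ∀ x : G, μ ((fun b => x + b) '' B) = 0

/-!
Let `π` be the zeroth coordinate, `N ⊆ ℝ` the Liouville numbers (a dense `Gδ` Lebesgue-null set),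
`(dₙ)` a dense sequence in `ℓᵖ` and `F = {y | ∀ n, 2⁻ⁿ ≤ ‖y - dₙ‖}`, which is nowhere dense.
Take `T = F ∩ π⁻¹(N)`. It is meagre because `F` is, and Haar null because Lebesgue measure on the
segment `[0, 1] e₀` gives measure zero to every translate of `π⁻¹(N)`.

As `p < ∞`, the elements of a compact set have uniformly small coordinates far out, so adding a
vector with large entries on sparse coordinates moves the compact set into `F`. For a test map
`f : K → ℓᵖ`, move `f(K) + [-1, 1] e₀` into `F` this way; the remaining freedom `c` along `e₀`
can then be chosen (from a residual set) so that `{k | π (f k) + const + c ∈ N}` is residual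
in `K`, hence not meagre.
-/

open Filter Topology TopologicalSpace Metric
open scoped ENNReal

theorem IsHaarNull.mono {G : Type*} [TopologicalSpace G] [AddCommGroup G] {A A' : Set G}
    (h : A ⊆ A') (hA' : IsHaarNull A') : IsHaarNull A := by
  obtain ⟨μ, hμ, B, hA'B, hB, hμB⟩ := hA'
  exact ⟨μ, hμ, B, h.trans hA'B, hB, hμB⟩

section Translates

variable {G : Type*} [TopologicalSpace G] [AddCommGroup G] (π : G →ₜ+ ℝ) {φ : ℝ → G}

theorem isHaarNull_preimage_of_volume_eq_zero (hφ : Continuous φ) (hπφ : ∀ t, π (φ t) = t)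
    {N : Set ℝ} (hN : MeasurableSet N) (hN₀ : volume N = 0) : IsHaarNull (π ⁻¹' N) := by
  borelize G
  set μ : Measure ℝ := volume.restrict (Icc 0 1)
  have : IsProbabilityMeasure μ := ⟨by simp [μ]⟩
  have hπ := (map_continuous π).measurable
  have hmap : ∀ M, MeasurableSet M → μ.map φ (π ⁻¹' M) = μ M := fun M hM => by
    rw [Measure.map_apply hφ.measurable (hπ hM), ← preimage_comp]
    simp [Function.comp_def, hπφ]
  refine ⟨μ.map φ, Measure.isProbabilityMeasure_map hφ.aemeasurable,
    π ⁻¹' N, subset_rfl, hπ hN, fun x => ?_⟩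
  have htrans : (x + ·) '' (π ⁻¹' N) = π ⁻¹' ((-π x + ·) ⁻¹' N) := by
    ext y; simp [Set.image_add_left]
  rw [htrans, hmap _ (measurable_const_add _ hN)]
  refine nonpos_iff_eq_zero.1 ((Measure.restrict_apply_le _ _).trans_eq ?_)
  rw [measure_preimage_add, hN₀]

theorem eventually_residual_not_isMeagre_preimage_add {K A : Type*} [TopologicalSpace K]
    [SeparableSpace K] [BaireSpace K] [Nonempty K] [TopologicalSpace A] [AddGroup A]
    [ContinuousAdd A] {h : K → A} (hh : Continuous h) {N : Set A} (hN : IsGδ N)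
    (hNres : N ∈ residual A) : ∀ᶠ c in residual A, ¬ IsMeagre {k | h k + c ∈ N} := by
  obtain ⟨D, hDc, hDd⟩ := exists_countable_dense K
  have hD : ∀ k ∈ D, ∀ᶠ c in residual A, h k + c ∈ N := fun k _ => by
    rwa [← (Homeomorph.addLeft (h k)).residual_map_eq] at hNres
  filter_upwards [(eventually_countable_ball hDc).2 hD] with c hc hmeagre
  have hres : {k | h k + c ∈ N} ∈ residual K :=
    residual_of_dense_Gδ (hN.preimage (hh.add continuous_const)) (hDd.mono hc)
  refine not_isMeagre_of_isOpen (X := K) isOpen_univ univ_nonempty ?_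
  rw [← union_compl_self {k | h k + c ∈ N}]
  exact hmeagre.union (by rwa [IsMeagre, compl_compl])

theorem not_isHaarMeager_inter_preimage [ContinuousAdd G] (hφ : Continuous φ)
    (hπφ : ∀ t, π (φ t) = t) {F : Set G}
    (hF : ∀ C : Set G, IsCompact C → ∃ x, ∀ w ∈ C, x + w ∈ F) {N : Set ℝ} (hN : IsGδ N)
    (hNres : N ∈ residual ℝ) : ¬ IsHaarMeager (F ∩ π ⁻¹' N) := by
  rintro ⟨B, hB, -, K, _, _, _, f, hf, hfB⟩
  obtain ⟨x, hx⟩ := hF _ ((isCompact_univ.prod isCompact_Icc).image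
    ((hf.comp continuous_fst).add (hφ.comp continuous_snd)) :
      IsCompact ((fun kt : K × ℝ => f kt.1 + φ kt.2) '' (univ ×ˢ Icc (-1) 1)))
  have hgood := eventually_residual_not_isMeagre_preimage_add (h := fun k => π x + π (f k))
    (continuous_const.add ((map_continuous π).comp hf)) hN hNres
  obtain ⟨c, hc, hcI⟩ := (dense_of_mem_residual hgood).exists_mem_open isOpen_Ioo
    (⟨0, by norm_num⟩ : (Ioo (-1 : ℝ) 1).Nonempty)
  refine hc ((hfB (-(x + φ c))).mono fun k (hk : π x + π (f k) + c ∈ N) => ?_)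
  refine ⟨x + (f k + φ c), hB ⟨hx _ ⟨(k, c), ⟨mem_univ _, Ioo_subset_Icc_self hcI⟩, rfl⟩, ?_⟩, ?_⟩
  · simpa [hπφ, add_assoc] using hk
  · dsimp only
    abel

end Translates

theorem isMeagre_setOf_forall_le_dist {X : Type*} [PseudoMetricSpace X] {d : ℕ → X}
    (hd : DenseRange d) {r : ℕ → ℝ} (hr : ∀ n, 0 < r n) :
    IsMeagre {y | ∀ n, r n ≤ dist y (d n)} := by
  have hU : Dense (⋃ n, ball (d n) (r n)) :=
    hd.mono (range_subset_iff.2 fun n => mem_iUnion_of_mem n (mem_ball_self (hr n)))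
  refine mem_of_superset (residual_of_dense_open (isOpen_iUnion fun n => isOpen_ball) hU) ?_
  intro y hy hyF
  obtain ⟨n, hn⟩ := mem_iUnion.1 hy
  exact (hyF n).not_gt hn

namespace lp

variable {α : Type*} {E : α → Type*} [∀ i, NormedAddCommGroup (E i)] {p : ℝ≥0∞} [Fact (1 ≤ p)]

theorem separableSpace [Countable α] [∀ i, SeparableSpace (E i)] (hp : p ≠ ∞) :
    SeparableSpace (lp E p) := by
  classical
  set S : Set (lp E p) := ⋃ i, range (lp.single p i)
  have hS : IsSeparable (Submodule.span ℕ S : Set (lp E p)) :=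
    (IsSeparable.iUnion fun i => isSeparable_range (lp.isometry_single i).continuous).span
  refine isSeparable_univ_iff.1 (hS.closure.mono fun y _ => ?_)
  refine mem_closure_of_tendsto (lp.hasSum_single hp y) (Eventually.of_forall fun s => ?_)
  exact Submodule.sum_mem _ fun i _ =>
    Submodule.subset_span (mem_iUnion_of_mem i (mem_range_self _))

theorem tendsto_norm_cofinite_zero (hp : p ≠ ∞) (y : lp E p) :
    Tendsto (fun i => ‖y i‖) cofinite (𝓝 0) := by
  have hp₀ : 0 < p.toReal := ENNReal.toReal_pos (zero_lt_one.trans_le Fact.out).ne' hp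
  have hpow := ((lp.memℓp y).summable hp₀).tendsto_cofinite_zero
  have hroot := (Real.continuousAt_rpow_const 0 p.toReal⁻¹ (Or.inr (inv_pos.2 hp₀).le)).tendsto
  rw [Real.zero_rpow (inv_pos.2 hp₀).ne'] at hroot
  exact (hroot.comp hpow).congr fun i => Real.rpow_rpow_inv (norm_nonneg _) hp₀.ne'

theorem eventually_forall_norm_lt_of_isCompact (hp : p ≠ ∞) {C : Set (lp E p)}
    (hC : IsCompact C) {ε : ℝ} (hε : 0 < ε) : ∀ᶠ i in cofinite, ∀ y ∈ C, ‖y i‖ < ε := by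
  have hp₀ : p ≠ 0 := (zero_lt_one.trans_le Fact.out).ne'
  have hloc : ∀ y₀ ∈ C, ∀ᶠ iy : α × lp E p in cofinite ×ˢ 𝓝 y₀, ‖iy.2 iy.1‖ < ε := by
    intro y₀ _
    filter_upwards [((tendsto_norm_cofinite_zero hp y₀).eventually_lt_const (half_pos hε)).prod_mk
      (ball_mem_nhds y₀ (half_pos hε))] with ⟨i, y⟩ ⟨hi, hy⟩
    calc ‖y i‖ ≤ ‖y₀ i‖ + ‖(y - y₀) i‖ := by simpa using norm_le_insert' (y i) (y₀ i)
      _ ≤ ‖y₀ i‖ + ‖y - y₀‖ := by gcongr; exact lp.norm_apply_le_norm hp₀ _ _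
      _ < ε / 2 + ε / 2 := add_lt_add hi (by simpa [dist_eq_norm] using hy)
      _ = ε := add_halves ε
  exact (Eventually.curry (hC.mem_prod_nhdsSet_of_forall hloc)).mono fun i hi =>
    hi.self_of_nhdsSet

variable {q : ℝ≥0∞} [Fact (1 ≤ q)]

theorem exists_forall_le_dist_add (hq : q ≠ ∞) (d : ℕ → lp (fun _ : ℕ => ℝ) q) {r : ℕ → ℝ}
    (hr : Summable r) (hr₀ : ∀ n, 0 < r n) {C : Set (lp (fun _ : ℕ => ℝ) q)}
    (hC : IsCompact C) : ∃ x, ∀ w ∈ C, ∀ n, r n ≤ dist (x + w) (d n) := by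
  have hq₀ : q ≠ 0 := (zero_lt_one.trans_le Fact.out).ne'
  have htail : ∀ n, ∀ᶠ m in atTop, ∀ y ∈ insert (d n) C, ‖y m‖ < r n / 2 := fun n => by
    simpa [← Nat.cofinite_eq_atTop] using
      eventually_forall_norm_lt_of_isCompact hq (hC.insert (d n)) (half_pos (hr₀ n))
  obtain ⟨m, hm, hmC⟩ := extraction_forall_of_eventually htail
  -- The translate puts `2 r n` at coordinate `m n`, where `C` and `d n` are below `r n / 2`.
  set e : ℕ → lp (fun _ : ℕ => ℝ) q := fun n => lp.single q (m n) (2 * r n)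
  have hsum : Summable e := by
    refine Summable.of_norm ?_
    simpa [e, lp.norm_single (pos_iff_ne_zero.2 hq₀), abs_of_pos (hr₀ _)] using hr.mul_left 2
  have hx : ∀ n, (∑' k, e k) (m n) = 2 * r n := fun n => by
    change lp.evalCLM ℝ _ q (m n) (∑' k, e k) = _
    rw [(lp.evalCLM ℝ _ q (m n)).map_tsum hsum, tsum_eq_single n]
    · simp [e, lp.evalCLM]
    · intro k hk
      simp [e, lp.evalCLM, hm.injective.ne hk.symm]
  refine ⟨∑' n, e n, fun w hw n => ?_⟩
  have hwn := hmC n w (mem_insert_of_mem _ hw)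
  have hdn := hmC n (d n) (mem_insert _ _)
  rw [Real.norm_eq_abs] at hwn hdn
  calc r n ≤ |(∑' k, e k) (m n) + w (m n) - d n (m n)| := by
        rw [hx]
        exact le_trans (by linarith [abs_lt.1 hwn, abs_lt.1 hdn]) (le_abs_self _)
    _ ≤ dist (∑' k, e k + w) (d n) := by
        simpa [dist_eq_norm] using lp.norm_apply_le_norm hq₀ (∑' k, e k + w - d n) (m n)

theorem exists_isHaarNull_isMeagre_not_isHaarMeager (hq : q ≠ ∞) :
    ∃ T : Set (lp (fun _ : ℕ => ℝ) q), IsHaarNull T ∧ IsMeagre T ∧ ¬ IsHaarMeager T := by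
  have := lp.separableSpace (E := fun _ : ℕ => ℝ) hq
  obtain ⟨d, hd⟩ := exists_dense_seq (lp (fun _ : ℕ => ℝ) q)
  set π : lp (fun _ : ℕ => ℝ) q →ₜ+ ℝ := ↑(lp.evalCLM ℝ (fun _ : ℕ => ℝ) q 0)
  have hφ : Continuous (lp.single (E := fun _ : ℕ => ℝ) q 0) :=
    (lp.isometry_single _).continuous
  have hπφ : ∀ t, π (lp.single q 0 t) = t := fun t => by simp [π, lp.evalCLM]
  refine ⟨{y | ∀ n, (1 / 2 : ℝ) ^ n ≤ dist y (d n)} ∩ π ⁻¹' {x | Liouville x}, ?_, ?_, ?_⟩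
  · exact (isHaarNull_preimage_of_volume_eq_zero π hφ hπφ
      IsGδ.setOfPred_liouville.measurableSet volume_setOfPred_liouville).mono inter_subset_right
  · exact (isMeagre_setOf_forall_le_dist hd fun n => by positivity).inter
  · refine not_isHaarMeager_inter_preimage π hφ hπφ (fun C hC => ?_)
      IsGδ.setOfPred_liouville eventually_residual_liouville
    exact exists_forall_le_dist_add hq d summable_geometric_two (fun n => by positivity) hC

end lp

/-- For every real `p` with `1 ≤ p < ∞`, in the Banach space `ℓᵖ` of real `p`-summable
sequences there exists a set which is Haar null and meager but not Haar meager. -/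
theorem exists_haarNull_meager_not_haarMeager_lp (p : ℝ) (hp : 1 ≤ p) :
    letI : Fact (1 ≤ ENNReal.ofReal p) := ⟨ENNReal.one_le_ofReal.mpr hp⟩
    ∃ T : Set (lp (fun _ : ℕ => ℝ) (ENNReal.ofReal p)),
      IsHaarNull T ∧ IsMeagre T ∧ ¬ IsHaarMeager T := by
  have : Fact (1 ≤ ENNReal.ofReal p) := ⟨ENNReal.one_le_ofReal.mpr hp⟩
  exact lp.exists_isHaarNull_isMeagre_not_isHaarMeager ENNReal.ofReal_ne_top
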